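/- Let d,m ∈ ℕ, T ∈ [0,∞), ξ ∈ ℝ^d, μ ∈ C(ℝ^d,ℝ^d), σ ∈ ℝ^{d×m}, φ ∈ C(ℝ^m,[0,∞)), V ∈ C¹(ℝ^d,[0,∞)), let ‖·‖ be a norm on ℝ^d, let J ⊆ [0,T] be an interval with 0 ∈ J, and let y ∈ C(J,ℝ^d) and w ∈ C([0,T],ℝ^m) satisfy for all x ∈ ℝ^d, u ∈ ℝ^m, t ∈ J that V'(x)μ(x+σu) ≤ φ(u)V(x), ‖x‖ ≤ V(x), and y(t) = ξ + ∫₀^t μ(y(s)) ds + σw(t). Then sup_{t∈J} [φ(w(t)) + ‖σw(t)‖] < ∞ and sup_{t∈J} ‖y(t)‖ ≤ V(ξ)·exp( T·sup_{s∈J} φ(w(s)) ) + sup_{t∈J} ‖σw(t)‖. -/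

import Mathlib

open MeasureTheory ProbabilityTheory Filter
open scoped ENNReal NNReal

noncomputable section

/-- `N` is a norm on the real vector space `E`. -/
def IsNorm {E : Type*} [AddCommGroup E] [Module ℝ E] (N : E → ℝ) : Prop :=
  (∀ x, N x = 0 ↔ x = 0) ∧ (∀ (a : ℝ) (x : E), N (a • x) = |a| * N x) ∧
    ∀ x y, N (x + y) ≤ N x + N y

/-!
Writing `y = z + σw` with `z t = ξ + ∫₀ᵗ μ(y s) ds`, the Lyapunov condition at `x = z s`,
`u = w s` gives `(V ∘ z)' = V'(z) μ(z + σw) ≤ φ(w) V(z) ≤ K V(z)` with `K = sup_J φ ∘ w`,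
so Grönwall yields `V(z t) ≤ V(ξ) e^{K t}`. Then `‖y‖ ≤ ‖z‖ + ‖σw‖ ≤ V(z) + ‖σw‖`.
All suprema are finite because `w` is continuous on the compact interval `[0, T] ⊇ J`.
-/

open Set Real

namespace IsNorm

lemma convexOn {E : Type*} [AddCommGroup E] [Module ℝ E] {N : E → ℝ} (h : IsNorm N) :
    ConvexOn ℝ univ N :=
  ⟨convex_univ, fun x _ y _ a b ha hb _ =>
    calc N (a • x + b • y) ≤ N (a • x) + N (b • y) := h.2.2 _ _
      _ = a • N x + b • N y := by
        rw [h.2.1, h.2.1, abs_of_nonneg ha, abs_of_nonneg hb, smul_eq_mul, smul_eq_mul]⟩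

lemma continuous {E : Type*} [NormedAddCommGroup E] [NormedSpace ℝ E] [FiniteDimensional ℝ E]
    {N : E → ℝ} (h : IsNorm N) : Continuous N :=
  h.convexOn.locallyLipschitz.continuous

end IsNorm

theorem IsCompact.bddAbove_image_comp_of_subset {α β : Type*} [TopologicalSpace α]
    [TopologicalSpace β] {s t : Set α} (hs : IsCompact s) (hts : t ⊆ s) {w : α → β}
    (hw : ContinuousOn w s) {F : β → ℝ} (hF : Continuous F) :
    BddAbove ((fun x => F (w x)) '' t) :=
  (hs.image_of_continuousOn (hF.comp_continuousOn hw)).bddAbove.mono (image_mono hts)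

theorem le_mul_exp_of_deriv_right_le_mul {f f' : ℝ → ℝ} {K a b : ℝ} (hab : a ≤ b)
    (hf : ContinuousOn f (Icc a b))
    (hf' : ∀ x ∈ Ico a b, HasDerivWithinAt f (f' x) (Ici x) x)
    (bound : ∀ x ∈ Ico a b, f' x ≤ K * f x) :
    f b ≤ f a * exp (K * (b - a)) := by
  have := le_gronwallBound_of_liminf_deriv_right_le hf
    (fun x hx _ hr => (hf' x hx).liminf_right_slope_le hr) le_rfl
    (fun x hx => (bound x hx).trans_eq (add_zero _).symm) b ⟨hab, le_rfl⟩
  rwa [gronwallBound_ε0] at this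

theorem ContinuousOn.hasDerivWithinAt_intervalIntegral_Ici {E : Type*} [NormedAddCommGroup E]
    [NormedSpace ℝ E] [CompleteSpace E] {g : ℝ → E} {a b s : ℝ}
    (hg : ContinuousOn g (Icc a b)) (hs : s ∈ Ico a b) :
    HasDerivWithinAt (fun u => ∫ r in a..u, g r) (g s) (Ici s) s :=
  intervalIntegral.integral_hasDerivWithinAt_right (t := Ioi s)
    (hg.mono (uIcc_subset_Icc (left_mem_Icc.2 (hs.1.trans hs.2.le)) (Ico_subset_Icc_self hs))
      ).intervalIntegrable
    ⟨Icc a b, Icc_mem_nhdsGT_of_mem hs, hg.aestronglyMeasurable measurableSet_Icc⟩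
    ((hg s (Ico_subset_Icc_self hs)).mono_of_mem_nhdsWithin (Icc_mem_nhdsGT_of_mem hs))

theorem apply_add_intervalIntegral_le_mul_exp {E : Type*} [NormedAddCommGroup E]
    [NormedSpace ℝ E] [CompleteSpace E] {V : E → ℝ} (hV : Differentiable ℝ V)
    {g : ℝ → E} {ξ : E} {K a b : ℝ} (hab : a ≤ b) (hg : ContinuousOn g (Icc a b))
    (bound : ∀ s ∈ Ico a b,
      fderiv ℝ V (ξ + ∫ r in a..s, g r) (g s) ≤ K * V (ξ + ∫ r in a..s, g r)) :
    V (ξ + ∫ r in a..b, g r) ≤ V ξ * exp (K * (b - a)) := by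
  have hz : ContinuousOn (fun u => ξ + ∫ r in a..u, g r) (Icc a b) := by
    have := intervalIntegral.continuousOn_primitive_interval (μ := volume)
      (by rw [uIcc_of_le hab]; exact hg.integrableOn_Icc : IntegrableOn g (uIcc a b))
    rw [uIcc_of_le hab] at this
    exact continuousOn_const.add this
  simpa using le_mul_exp_of_deriv_right_le_mul hab (hV.continuous.comp_continuousOn hz)
    (fun s hs => (hV _).hasFDerivAt.comp_hasDerivWithinAt s
      ((hg.hasDerivWithinAt_intervalIntegral_Ici hs).const_add ξ)) bound

theorem perturbed_ode_a_priori_bound_general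
    (d m : ℕ) (T : ℝ)
    (ξ : Fin d → ℝ)
    (μ : (Fin d → ℝ) → (Fin d → ℝ)) (hμ : Continuous μ)
    (σ : Matrix (Fin d) (Fin m) ℝ)
    (φ : (Fin m → ℝ) → ℝ) (hφc : Continuous φ) (hφ0 : ∀ z, 0 ≤ φ z)
    (V : (Fin d → ℝ) → ℝ) (hV : ContDiff ℝ 1 V) (hV0 : ∀ x, 0 ≤ V x)
    (Nd : (Fin d → ℝ) → ℝ) (hNd : IsNorm Nd)
    (J : Set ℝ) (hJmem : J ⊆ Set.Icc 0 T) (hJord : J.OrdConnected)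
    (hJ0 : (0 : ℝ) ∈ J)
    (y : ℝ → (Fin d → ℝ)) (hyc : ContinuousOn y J)
    (w : ℝ → (Fin m → ℝ)) (hwc : ContinuousOn w (Set.Icc (0 : ℝ) T))
    (hLyap : ∀ (x : Fin d → ℝ) (u : Fin m → ℝ),
      fderiv ℝ V x (μ (x + σ.mulVec u)) ≤ φ u * V x)
    (hNV : ∀ x, Nd x ≤ V x)
    (heq : ∀ t ∈ J, y t = ξ + (∫ s in (0 : ℝ)..t, μ (y s)) + σ.mulVec (w t)) :
    BddAbove ((fun t => φ (w t) + Nd (σ.mulVec (w t))) '' J) ∧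
    ∀ t ∈ J, Nd (y t) ≤
      V ξ * Real.exp (T * sSup ((fun s => φ (w s)) '' J)) +
        sSup ((fun t => Nd (σ.mulVec (w t))) '' J) := by
  have hNσ : Continuous fun u => Nd (σ.mulVec u) := hNd.continuous.comp (by fun_prop)
  have bdd (F : (Fin m → ℝ) → ℝ) (hF : Continuous F) : BddAbove ((fun t => F (w t)) '' J) :=
    isCompact_Icc.bddAbove_image_comp_of_subset hJmem hwc hF
  refine ⟨bdd _ (hφc.add hNσ), fun t ht => ?_⟩
  set K := sSup ((fun s => φ (w s)) '' J)
  have hφK (s) (hs : s ∈ J) : φ (w s) ≤ K := le_csSup (bdd φ hφc) ⟨s, hs, rfl⟩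
  have hIcc : Icc 0 t ⊆ J := hJord.out hJ0 ht
  have hbound : ∀ s ∈ Ico 0 t, fderiv ℝ V (ξ + ∫ r in 0..s, μ (y r)) (μ (y s)) ≤
      K * V (ξ + ∫ r in 0..s, μ (y r)) := by
    intro s hs
    have hsJ : s ∈ J := hIcc (Ico_subset_Icc_self hs)
    calc fderiv ℝ V _ (μ (y s)) ≤ φ (w s) * V (ξ + ∫ r in 0..s, μ (y r)) := by
          rw [heq s hsJ]; exact hLyap _ _
      _ ≤ K * V (ξ + ∫ r in 0..s, μ (y r)) := by gcongr; exacts [hV0 _, hφK s hsJ]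
  have hVz := apply_add_intervalIntegral_le_mul_exp (hV.differentiable one_ne_zero)
    (hJmem ht).1 (hμ.comp_continuousOn (hyc.mono hIcc)) hbound
  rw [sub_zero] at hVz
  have hexp : exp (K * t) ≤ exp (T * K) := by
    rw [mul_comm T]
    gcongr
    exacts [(hφ0 _).trans (hφK 0 hJ0), (hJmem ht).2]
  calc Nd (y t) ≤ Nd (ξ + ∫ s in 0..t, μ (y s)) + Nd (σ.mulVec (w t)) := by
        rw [heq t ht]; exact hNd.2.2 _ _
    _ ≤ V ξ * exp (T * K) + sSup ((fun t => Nd (σ.mulVec (w t))) '' J) := by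
        gcongr
        · exact (hNV _).trans (hVz.trans (by gcongr; exact hV0 ξ))
        · exact le_csSup (bdd _ hNσ) ⟨t, ht, rfl⟩

/-- **Lemma (a priori bound for solutions of perturbed ODEs via a
Lyapunov-type function).** -/
theorem perturbed_ode_a_priori_bound
    (d m : ℕ) (hd : 0 < d) (hm : 0 < m) (T : ℝ) (hT : 0 ≤ T)
    (ξ : Fin d → ℝ)
    (μ : (Fin d → ℝ) → (Fin d → ℝ)) (hμ : Continuous μ)
    (σ : Matrix (Fin d) (Fin m) ℝ)
    (φ : (Fin m → ℝ) → ℝ) (hφc : Continuous φ) (hφ0 : ∀ z, 0 ≤ φ z)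
    (V : (Fin d → ℝ) → ℝ) (hV : ContDiff ℝ 1 V) (hV0 : ∀ x, 0 ≤ V x)
    (Nd : (Fin d → ℝ) → ℝ) (hNd : IsNorm Nd)
    (J : Set ℝ) (hJmem : J ⊆ Set.Icc 0 T) (hJord : J.OrdConnected)
    (hJ0 : (0 : ℝ) ∈ J)
    (y : ℝ → (Fin d → ℝ)) (hyc : ContinuousOn y J)
    (w : ℝ → (Fin m → ℝ)) (hwc : ContinuousOn w (Set.Icc (0 : ℝ) T))
    (hLyap : ∀ (x : Fin d → ℝ) (u : Fin m → ℝ),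
      fderiv ℝ V x (μ (x + σ.mulVec u)) ≤ φ u * V x)
    (hNV : ∀ x, Nd x ≤ V x)
    (heq : ∀ t ∈ J, y t = ξ + (∫ s in (0 : ℝ)..t, μ (y s)) + σ.mulVec (w t)) :
    BddAbove ((fun t => φ (w t) + Nd (σ.mulVec (w t))) '' J) ∧
    ∀ t ∈ J, Nd (y t) ≤
      V ξ * Real.exp (T * sSup ((fun s => φ (w s)) '' J)) +
        sSup ((fun t => Nd (σ.mulVec (w t))) '' J) :=
  perturbed_ode_a_priori_bound_general d m T ξ μ hμ σ φ hφc hφ0 V hV hV0 Nd hNd J hJmem hJord hJ0 y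
    hyc w hwc hLyap hNV heq
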